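/- Let G be a finite simple graph on a vertex type V, and let cone(G) be the simple graph on Option V in which the extra vertex (none) is adjacent to every vertex (some a), and (some a) is adjacent to (some b) if and only if a and b are adjacent in G. Let H be a finite simple graph. Then there is a bijection between the set of graph homomorphisms from cone(G) to H and the disjoint union, over all vertices w of H, of the sets of graph homomorphisms from G to the subgraph of H induced on the neighborhood of w. In particular the number of homomorphisms from cone(G) to H equals ∑_{w ∈ V(H)} (number of homomorphisms from G to H_w). -/

import Mathlib

/-- The cone over a simple graph `G`: one new vertex (`none`) adjacent to every vertex of
`G`, with the adjacency of `G` preserved on the old vertices. -/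
def SimpleGraph.cone {V : Type*} (G : SimpleGraph V) : SimpleGraph (Option V) where
  Adj u v :=
    match u, v with
    | none, none => False
    | none, some _ => True
    | some _, none => True
    | some a, some b => G.Adj a b
  symm := by
    constructor
    intro u v h
    cases u <;> cases v <;> simp_all <;> exact h.symm
  loopless := by
    constructor
    intro u
    cases u <;> simp

/-! A homomorphism from the cone sends the apex to some `w` and, since every old vertex is
adjacent to the apex, the rest of `G` into the neighborhood of `w`; conversely such a pair
glues back to a homomorphism from the cone. -/

namespace SimpleGraph

variable {V W : Type*} {G : SimpleGraph V} {H : SimpleGraph W}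

theorem cone_adj_none_some (v : V) : G.cone.Adj none (some v) := trivial

theorem cone_adj_some_some {a b : V} : G.cone.Adj (some a) (some b) ↔ G.Adj a b := Iff.rfl

theorem not_cone_adj_none_none : ¬G.cone.Adj none none := id

def Hom.coneRestrict (f : G.cone →g H) : G →g H.induce (H.neighborSet (f none)) where
  toFun v := ⟨f (some v), f.map_adj (cone_adj_none_some v)⟩
  map_rel' h := f.map_adj (cone_adj_some_some.mpr h)

def Hom.coneExtend (w : W) (f : G →g H.induce (H.neighborSet w)) : G.cone →g H where
  toFun
    | none => w
    | some v => f v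
  map_rel' := by
    rintro (_ | a) (_ | b) h
    · exact absurd h not_cone_adj_none_none
    · exact (f b).2
    · exact ((f a).2 : H.Adj w (f a)).symm
    · exact f.map_adj h

def coneHomEquiv (G : SimpleGraph V) (H : SimpleGraph W) :
    (G.cone →g H) ≃ (Σ w : W, (G →g H.induce (H.neighborSet w))) where
  toFun f := ⟨f none, f.coneRestrict⟩
  invFun p := Hom.coneExtend p.1 p.2
  left_inv f := by
    ext (_ | v) <;> rfl
  right_inv _ := rfl

theorem natCard_cone_hom [Finite V] [Fintype W] (G : SimpleGraph V) (H : SimpleGraph W) :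
    Nat.card (G.cone →g H) = ∑ w : W, Nat.card (G →g H.induce (H.neighborSet w)) := by
  rw [Nat.card_congr (coneHomEquiv G H), Nat.card_sigma]

end SimpleGraph

/-- Dyer–Greenhill counting identity: homomorphisms from `cone G` to `H` are in bijection
with pairs of a vertex `w` of `H` and a homomorphism from `G` to the neighborhood graph
`H_w`; in particular the numbers of homomorphisms agree. -/
theorem stmt_8 {V W : Type*} [Fintype V] [Fintype W]
    (G : SimpleGraph V) (H : SimpleGraph W) :
    Nonempty ((G.cone →g H) ≃ (Σ w : W, (G →g H.induce (H.neighborSet w)))) ∧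
    Nat.card (G.cone →g H) = ∑ w : W, Nat.card (G →g H.induce (H.neighborSet w)) :=
  ⟨⟨G.coneHomEquiv H⟩, G.natCard_cone_hom H⟩
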